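/- Let H be a countable type (of trajectories), let p, q : H → ℝ be probability mass functions (nonnegative functions each summing to 1 over H) such that q is absolutely continuous with respect to p (i.e. q τ > 0 implies p τ > 0), and let γ ∈ (0,1). Let r : ℕ → H → ℝ satisfy r t τ > 0 for all t and τ, and define the discounted return R τ = ∑_{t=0}^∞ γ^t · r t τ, assumed to be a convergent series for every τ. Assume moreover that τ ↦ p τ · R τ is summable, that for every τ with q τ > 0 the series ∑_{t=0}^∞ (1−γ) γ^t · log(r t τ) converges, and that both τ ↦ q τ · (log(R τ) + log(p τ / q τ)) and τ ↦ q τ · (∑_{t=0}^∞ (1−γ) γ^t · log(r t τ) + log(p τ / q τ)) are summable. Then log(∑_τ p τ · R τ) ≥ ∑_τ q τ · (∑_{t=0}^∞ (1−γ) γ^t · log(r t τ) + log(p τ / q τ)). -/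

import Mathlib

/-!
The discounted weights `(1 - γ) γ^t` form a probability distribution on `ℕ`, so Jensen's inequality
for the concave `log` bounds the inner log-return sum by `log ((1 - γ) R τ) ≤ log (R τ)`. Since
`q ≪ p`, `log (R τ) + log (p τ / q τ) = log (p τ R τ / q τ)` on the support of `q`, and Jensen
again, now for the distribution `q`, bounds `∑ q τ log (p τ R τ / q τ)` by
`log ∑_{q τ > 0} p τ R τ ≤ log ∑ p τ R τ`.
-/

open Real

theorem Real.tsum_mul_log_le_log_tsum {ι : Type*} {w x : ι → ℝ} (hw0 : ∀ i, 0 ≤ w i)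
    (hw1 : ∑' i, w i = 1) (hx : ∀ i, 0 < w i → 0 < x i)
    (hwx : Summable fun i => w i * x i) (hwl : Summable fun i => w i * log (x i)) :
    ∑' i, w i * log (x i) ≤ log (∑' i, w i * x i) := by
  have hw : Summable w := by
    by_contra h
    simp [tsum_eq_zero_of_not_summable h] at hw1
  obtain ⟨i₀, hi₀⟩ : ∃ i, 0 < w i := by
    by_contra! h
    simp [fun i => le_antisymm (h i) (hw0 i)] at hw1
  have hwx0 (i : ι) : 0 ≤ w i * x i := by
    rcases (hw0 i).eq_or_lt with h | h
    · simp [← h]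
    · exact (mul_pos h (hx i h)).le
  set m := ∑' i, w i * x i
  have hm : 0 < m := hwx.tsum_pos hwx0 i₀ (mul_pos hi₀ (hx i₀ hi₀))
  -- tangent line of `log` at `m`: `log y ≤ log m + y / m - 1`
  have tangent (i : ι) : w i * log (x i) ≤ w i * log m + w i * x i / m - w i := by
    rcases (hw0 i).eq_or_lt with h | h
    · simp [← h]
    · have hxi := hx i h
      have := log_le_sub_one_of_pos (div_pos hxi hm)
      rw [log_div hxi.ne' hm.ne'] at this
      calc w i * log (x i) ≤ w i * (log m + (x i / m - 1)) := by gcongr; linarith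
        _ = w i * log m + w i * x i / m - w i := by ring
  have hs1 : Summable fun i => w i * log m := hw.mul_right _
  have hs2 : Summable fun i => w i * x i / m := hwx.div_const m
  calc ∑' i, w i * log (x i)
      ≤ ∑' i, (w i * log m + w i * x i / m - w i) :=
        Summable.tsum_le_tsum tangent hwl ((hs1.add hs2).sub hw)
    _ = log m := by
        rw [(hs1.add hs2).tsum_sub hw, hs1.tsum_add hs2, tsum_mul_right, tsum_div_const, hw1]
        field_simp
        ring

theorem Real.tsum_discounted_log_le_log_tsum {γ : ℝ} (hγ0 : 0 ≤ γ) (hγ1 : γ < 1) {x : ℕ → ℝ}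
    (hx : ∀ t, 0 < x t) (hsum : Summable fun t => γ ^ t * x t)
    (hlog : Summable fun t => (1 - γ) * γ ^ t * log (x t)) :
    ∑' t, (1 - γ) * γ ^ t * log (x t) ≤ log (∑' t, γ ^ t * x t) := by
  have hγ : 0 < 1 - γ := by linarith
  have hweights : ∑' t : ℕ, (1 - γ) * γ ^ t = 1 := by
    rw [tsum_mul_left, tsum_geometric_of_lt_one hγ0 hγ1, mul_inv_cancel₀ hγ.ne']
  have hS : 0 < ∑' t, γ ^ t * x t :=
    hsum.tsum_pos (fun t => by have := hx t; positivity) 0 (by simpa using hx 0)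
  have hdiscount : ∑' t, (1 - γ) * γ ^ t * x t = (1 - γ) * ∑' t, γ ^ t * x t := by
    simp only [mul_assoc, tsum_mul_left]
  calc ∑' t, (1 - γ) * γ ^ t * log (x t)
      ≤ log (∑' t, (1 - γ) * γ ^ t * x t) :=
        tsum_mul_log_le_log_tsum (fun t => by positivity) hweights (fun t _ => hx t)
          (by simpa only [mul_assoc] using hsum.mul_left (1 - γ)) hlog
    _ ≤ log (∑' t, γ ^ t * x t) := by
        rw [hdiscount]
        exact log_le_log (mul_pos hγ hS) (by nlinarith)

theorem Real.tsum_mul_log_add_log_div_le_log_tsum {ι : Type*} {p q f : ι → ℝ}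
    (hp0 : ∀ i, 0 ≤ p i) (hq0 : ∀ i, 0 ≤ q i) (hq1 : ∑' i, q i = 1)
    (habs : ∀ i, 0 < q i → 0 < p i) (hf : ∀ i, 0 < f i) (hpf : Summable fun i => p i * f i)
    (hsum : Summable fun i => q i * (log (f i) + log (p i / q i))) :
    ∑' i, q i * (log (f i) + log (p i / q i)) ≤ log (∑' i, p i * f i) := by
  set x := fun i => p i * f i / q i
  have hx (i : ι) (h : 0 < q i) : 0 < x i := div_pos (mul_pos (habs i h) (hf i)) h
  have hlog (i : ι) : q i * (log (f i) + log (p i / q i)) = q i * log (x i) := by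
    rcases (hq0 i).eq_or_lt with h | h
    · simp [← h]
    · have hpi := habs i h
      rw [log_div (mul_pos hpi (hf i)).ne' h.ne', log_mul hpi.ne' (hf i).ne',
        log_div hpi.ne' h.ne']
      ring
  have hqx0 (i : ι) : 0 ≤ q i * x i := by
    rcases (hq0 i).eq_or_lt with h | h
    · simp [← h]
    · exact (mul_pos h (hx i h)).le
  have hqx_le (i : ι) : q i * x i ≤ p i * f i := by
    rcases (hq0 i).eq_or_lt with h | h
    · simpa [← h] using mul_nonneg (hp0 i) (hf i).le
    · exact (mul_div_cancel₀ _ h.ne').le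
  have hqx : Summable fun i => q i * x i := hpf.of_nonneg_of_le hqx0 hqx_le
  obtain ⟨i₀, hi₀⟩ : ∃ i, 0 < q i := by
    by_contra! h
    simp [fun i => le_antisymm (h i) (hq0 i)] at hq1
  calc ∑' i, q i * (log (f i) + log (p i / q i))
      = ∑' i, q i * log (x i) := tsum_congr hlog
    _ ≤ log (∑' i, q i * x i) :=
        tsum_mul_log_le_log_tsum hq0 hq1 hx hqx (hsum.congr hlog)
    _ ≤ log (∑' i, p i * f i) :=
        log_le_log (hqx.tsum_pos hqx0 i₀ (mul_pos hi₀ (hx i₀ hi₀)))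
          (hqx.tsum_le_tsum hqx_le hpf)

theorem sambo_theorem1_distributional_general
    {H : Type*}
    (p q : H → ℝ)
    (hp0 : ∀ τ, 0 ≤ p τ)
    (hq0 : ∀ τ, 0 ≤ q τ) (hq1 : ∑' τ, q τ = 1)
    (habs : ∀ τ, 0 < q τ → 0 < p τ)
    (γ : ℝ) (hγ0 : 0 < γ) (hγ1 : γ < 1)
    (r : ℕ → H → ℝ) (hr : ∀ t τ, 0 < r t τ)
    (R : H → ℝ) (hR : ∀ τ, R τ = ∑' t : ℕ, γ ^ t * r t τ)
    (hRconv : ∀ τ, Summable fun t : ℕ => γ ^ t * r t τ)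
    (hpR : Summable fun τ => p τ * R τ)
    (hlogconv : ∀ τ, 0 < q τ →
      Summable fun t : ℕ => (1 - γ) * γ ^ t * Real.log (r t τ))
    (hsum1 : Summable fun τ => q τ * (Real.log (R τ) + Real.log (p τ / q τ)))
    (hsum2 : Summable fun τ =>
      q τ * ((∑' t : ℕ, (1 - γ) * γ ^ t * Real.log (r t τ)) + Real.log (p τ / q τ))) :
    Real.log (∑' τ, p τ * R τ) ≥
      ∑' τ, q τ * ((∑' t : ℕ, (1 - γ) * γ ^ t * Real.log (r t τ)) + Real.log (p τ / q τ)) := by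
  have hRpos (τ : H) : 0 < R τ := by
    rw [hR τ]
    exact (hRconv τ).tsum_pos (fun t => (mul_pos (pow_pos hγ0 t) (hr t τ)).le) 0
      (by simpa using hr 0 τ)
  have hinner (τ : H) :
      q τ * ((∑' t : ℕ, (1 - γ) * γ ^ t * log (r t τ)) + log (p τ / q τ)) ≤
        q τ * (log (R τ) + log (p τ / q τ)) := by
    rcases (hq0 τ).eq_or_lt with h | h
    · simp [← h]
    · gcongr
      rw [hR τ]
      exact tsum_discounted_log_le_log_tsum hγ0.le hγ1 (fun t => hr t τ) (hRconv τ)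
        (hlogconv τ h)
  calc ∑' τ, q τ * ((∑' t : ℕ, (1 - γ) * γ ^ t * log (r t τ)) + log (p τ / q τ))
      ≤ ∑' τ, q τ * (log (R τ) + log (p τ / q τ)) := hsum2.tsum_le_tsum hinner hsum1
    _ ≤ log (∑' τ, p τ * R τ) :=
        tsum_mul_log_add_log_div_le_log_tsum hp0 hq0 hq1 habs hRpos hpR hsum1

/-- Abstract distributional form of Theorem 1 (SAMBO-RL): the log of the true
objective `∑ τ, p τ * R τ` is bounded below by the shifts-aware surrogate
objective `∑ τ, q τ * (∑ t, (1-γ) γ^t log (r t τ) + log (p τ / q τ))`. -/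
theorem sambo_theorem1_distributional
    {H : Type*} [Countable H]
    (p q : H → ℝ)
    (hp0 : ∀ τ, 0 ≤ p τ) (hp1 : ∑' τ, p τ = 1)
    (hq0 : ∀ τ, 0 ≤ q τ) (hq1 : ∑' τ, q τ = 1)
    (habs : ∀ τ, 0 < q τ → 0 < p τ)
    (γ : ℝ) (hγ0 : 0 < γ) (hγ1 : γ < 1)
    (r : ℕ → H → ℝ) (hr : ∀ t τ, 0 < r t τ)
    (R : H → ℝ) (hR : ∀ τ, R τ = ∑' t : ℕ, γ ^ t * r t τ)
    (hRconv : ∀ τ, Summable fun t : ℕ => γ ^ t * r t τ)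
    (hpR : Summable fun τ => p τ * R τ)
    (hlogconv : ∀ τ, 0 < q τ →
      Summable fun t : ℕ => (1 - γ) * γ ^ t * Real.log (r t τ))
    (hsum1 : Summable fun τ => q τ * (Real.log (R τ) + Real.log (p τ / q τ)))
    (hsum2 : Summable fun τ =>
      q τ * ((∑' t : ℕ, (1 - γ) * γ ^ t * Real.log (r t τ)) + Real.log (p τ / q τ))) :
    Real.log (∑' τ, p τ * R τ) ≥
      ∑' τ, q τ * ((∑' t : ℕ, (1 - γ) * γ ^ t * Real.log (r t τ)) + Real.log (p τ / q τ)) :=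
  sambo_theorem1_distributional_general p q hp0 hq0 hq1 habs γ hγ0 hγ1 r hr R hR hRconv hpR hlogconv
    hsum1 hsum2
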